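/- Let I ⊆ S be a support-2 monomial ideal whose underlying graph G(I) has girth at least six. Suppose {x_i, x_j} ∈ E(G(I)) has at least two minimal generators of I supported on it, and suppose for every leaf vertex x_ℓ of G(I) the distance d(x_i, x_ℓ) ≥ 2 (or for every leaf x_ℓ, d(x_j, x_ℓ) ≥ 2). Then I^{(1)} ≠ I. -/

import Mathlib

set_option synthInstance.maxHeartbeats 1000000
set_option maxHeartbeats 1000000

open MvPolynomial

section Defs

variable {K : Type*} [Field K] {σ : Type*}

/-- `I` is a monomial ideal. -/
def IsMonomialIdeal (I : Ideal (MvPolynomial σ K)) : Prop :=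
  ∃ A : Set (σ →₀ ℕ), I = Ideal.span ((fun a => (monomial a (1 : K) : MvPolynomial σ K)) '' A)

/-- Exponent vectors of the minimal monomial generators of `I`. -/
def minGens (I : Ideal (MvPolynomial σ K)) : Set (σ →₀ ℕ) :=
  {a | (monomial a (1 : K) : MvPolynomial σ K) ∈ I ∧
    ∀ b : σ →₀ ℕ, (monomial b (1 : K) : MvPolynomial σ K) ∈ I → b ≤ a → b = a}

/-- A support-2 monomial ideal: every minimal monomial generator is supported
on exactly two variables. -/
def IsSupportTwo (I : Ideal (MvPolynomial σ K)) : Prop :=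
  ∀ a ∈ minGens I, a.support.card = 2

variable [DecidableEq σ]

/-- Minimal monomial generators of `I` supported on `{i, j}`. -/
def supportedOn (I : Ideal (MvPolynomial σ K)) (i j : σ) : Set (σ →₀ ℕ) :=
  {a | a ∈ minGens I ∧ a.support = {i, j}}

/-- `ν_{i,j}`: the minimum exponent of `x_i` among the minimal generators of `I`
supported on `{i, j}`. -/
noncomputable def nuExp (I : Ideal (MvPolynomial σ K)) (i j : σ) : ℕ :=
  sInf ((fun a => a i) '' supportedOn I i j)

/-- `μ_{i,j}`: the maximum exponent of `x_i` among the minimal generators of `I`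
supported on `{i, j}`. -/
noncomputable def muExp (I : Ideal (MvPolynomial σ K)) (i j : σ) : ℕ :=
  sSup ((fun a => a i) '' supportedOn I i j)

/-- The underlying simple graph `G(I)` of a support-2 monomial ideal. -/
def underGraph (I : Ideal (MvPolynomial σ K)) : SimpleGraph σ where
  Adj i j := i ≠ j ∧ (supportedOn I i j).Nonempty
  symm := ⟨by
    rintro i j ⟨hij, a, hmin, hs⟩
    exact ⟨hij.symm, a, hmin, by rw [hs, Finset.pair_comm]⟩⟩
  loopless := ⟨fun i h => h.1 rfl⟩

end Defs

section Symbolic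

variable {R : Type*} [CommRing R]

/-- The component of `I` at a prime `P`, namely `I S_P ∩ S`. -/
noncomputable def localizedComponent (I P : Ideal R) (hP : P.IsPrime) : Ideal R :=
  letI := hP
  (I.map (algebraMap R (Localization.AtPrime P))).comap
    (algebraMap R (Localization.AtPrime P))

/-- The `s`-th symbolic power `I^{(s)} = ⋂_{P ∈ MinAss(I)} (I^s S_P ∩ S)`. -/
noncomputable def symbolicPower (I : Ideal R) (s : ℕ) : Ideal R :=
  ⨅ P : I.minimalPrimes, localizedComponent (I ^ s) P.1 P.2.1.1

/-- A Simis ideal: `I^{(s)} = I^s` for all `s ≥ 1`. -/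
def IsSimis (I : Ideal R) : Prop := ∀ s : ℕ, 1 ≤ s → symbolicPower I s = I ^ s

/-- `I` has no embedded associated primes. -/
def NoEmbeddedPrimes (I : Ideal R) : Prop :=
  ∀ P ∈ associatedPrimes R (R ⧸ I), P ∈ I.minimalPrimes

end Symbolic

section Decomp

variable {K : Type*} [Field K] {σ : Type*}

/-- An irreducible monomial ideal: generated by pure powers of variables. -/
def IsIrredMonomialIdeal (Q : Ideal (MvPolynomial σ K)) : Prop :=
  ∃ (t : Finset σ) (e : σ → ℕ), (∀ i ∈ t, 1 ≤ e i) ∧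
    Q = Ideal.span ((fun i => (X i : MvPolynomial σ K) ^ e i) '' t)

/-- `I` has a minimal (irredundant, distinct radicals) irreducible decomposition. -/
def HasMinimalIrredDecomp (I : Ideal (MvPolynomial σ K)) : Prop :=
  ∃ (r : ℕ) (Q : Fin r → Ideal (MvPolynomial σ K)),
    (∀ k, IsIrredMonomialIdeal (Q k)) ∧ I = ⨅ k, Q k ∧
    (∀ k, (⨅ l ∈ ({k}ᶜ : Set (Fin r)), Q l) ≠ I) ∧
    (∀ k l, k ≠ l → (Q k).radical ≠ (Q l).radical)

/-- The ideal obtained from `J` by the standard linear weighting `x_i ↦ x_i^{d_i}`. -/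
noncomputable def weightedIdeal (d : σ → ℕ) (J : Ideal (MvPolynomial σ K)) : Ideal (MvPolynomial σ K) :=
  Ideal.span {m | ∃ a ∈ minGens J, ∃ b : σ →₀ ℕ,
    (∀ i, b i = d i * a i) ∧ m = (monomial b (1 : K) : MvPolynomial σ K)}

/-- `I` has a standard linear weighting: there are `d_i ≥ 1` such that every
minimal generator supported on `{i,j}` is `x_i^{d_i} x_j^{d_j}`. -/
def HasStdWeighting (I : Ideal (MvPolynomial σ K)) : Prop :=
  ∃ d : σ → ℕ, (∀ i, 1 ≤ d i) ∧ ∀ a ∈ minGens I, ∀ i ∈ a.support, a i = d i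

variable (K) in
/-- The edge ideal of a simple graph. -/
noncomputable def edgeIdeal (G : SimpleGraph σ) : Ideal (MvPolynomial σ K) :=
  Ideal.span {m | ∃ i j, G.Adj i j ∧ m = (X i * X j : MvPolynomial σ K)}

end Decomp

section Graph

variable {σ : Type*}

/-- A vertex cover of a simple graph. -/
def IsVertexCover (G : SimpleGraph σ) (C : Set σ) : Prop :=
  ∀ ⦃i j⦄, G.Adj i j → i ∈ C ∨ j ∈ C

/-- A minimal vertex cover of a simple graph. -/
def IsMinimalVertexCover (G : SimpleGraph σ) (C : Set σ) : Prop :=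
  IsVertexCover G C ∧ ∀ D ⊆ C, IsVertexCover G D → D = C

end Graph

section CM

variable {K : Type*} [Field K] {σ : Type*}

/-- The depth of `S/I` with respect to the irrelevant maximal ideal
`⟨x_1, …, x_n⟩`: the supremum of lengths of regular sequences on `S/I`
consisting of elements of that ideal. -/
noncomputable def quotDepth (I : Ideal (MvPolynomial σ K)) : ℕ∞ :=
  sSup {n : ℕ∞ | ∃ rs : List (MvPolynomial σ K), (rs.length : ℕ∞) = n ∧
    (∀ r ∈ rs, r ∈ Ideal.span (Set.range (X : σ → MvPolynomial σ K))) ∧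
    RingTheory.Sequence.IsRegular (MvPolynomial σ K ⧸ I)
      (rs.map (Ideal.Quotient.mk I))}

/-- `S/I` is Cohen–Macaulay: depth equals Krull dimension. -/
def IsCohenMacaulayQuot (I : Ideal (MvPolynomial σ K)) : Prop :=
  (quotDepth I : WithBot ℕ∞) = ringKrullDim (MvPolynomial σ K ⧸ I)

/-- The height of a prime ideal, as the Krull dimension of the localization. -/
noncomputable def primeHeight' {R : Type*} [CommRing R] (P : Ideal R) (hP : P.IsPrime) :
    WithBot ℕ∞ :=
  letI := hP
  ringKrullDim (Localization.AtPrime P)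

/-- `I` is unmixed: all associated primes of `S/I` have the same height. -/
def IsUnmixed {R : Type*} [CommRing R] (I : Ideal R) : Prop :=
  ∀ P, ∀ hP : P ∈ associatedPrimes R (R ⧸ I), ∀ Q, ∀ hQ : Q ∈ associatedPrimes R (R ⧸ I),
    primeHeight' P hP.1 = primeHeight' Q hQ.1

end CM


/-! Let `ν_{ij}` and `ν_{ji}` (`nuExp I i j`, `nuExp I j i`) be the least exponents of `x_i`
and `x_j` among the generators on `{i, j}`. For each neighbour `k ≠ j` of `i` pick a further
neighbour `t_k ≠ i` of `k` (`k` is not a leaf) and a generator on `{k, t_k}`, with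
`x_{t_k}`-exponent `e_k`. The witness is `m = x_i^{ν_{ij}} x_j^{ν_{ji}} ∏_k x_{t_k}^{e_k}`.

The minimal primes of `I` are `⟨x_v : v ∈ C⟩` for minimal vertex covers `C` of `G(I)`. If `i ∉ C`
(or `j ∉ C`), a generator on `{i, j}` of least `x_j`- (or `x_i`-) exponent divides `x_i^N m`;
otherwise `i` has a neighbour `k ∉ C`, `k ≠ j`, and the generator on `{k, t_k}` divides
`x_k^N m`. Hence `m ∈ I^{(1)}`. On the other hand girth `≥ 6` leaves `ij` as the only edge among
`i`, `j` and the `t_k`, so a generator dividing `m` lies on `{i, j}` with both exponents minimal;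
it then divides every generator on `{i, j}`, which contradicts there being two of them. -/

namespace SimpleGraph

variable {α : Type*} {G : SimpleGraph α}

lemma egirth_le_three {a b c : α} (h1 : G.Adj a b) (h2 : G.Adj b c) (h3 : G.Adj c a) :
    G.egirth ≤ 3 := by
  have hc : (Walk.cons h1 (Walk.cons h2 (Walk.cons h3 Walk.nil))).IsCycle := by
    simp [Walk.isCycle_def, Walk.isTrail_def, Sym2.eq, h1.ne, h2.ne, h3.ne, h1.ne', h3.ne']
  simpa using egirth_le_length hc

lemma egirth_le_four {a b c d : α} (h1 : G.Adj a b) (h2 : G.Adj b c) (h3 : G.Adj c d)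
    (h4 : G.Adj d a) (hac : a ≠ c) (hbd : b ≠ d) : G.egirth ≤ 4 := by
  have hc : (Walk.cons h1 (Walk.cons h2 (Walk.cons h3 (Walk.cons h4 Walk.nil)))).IsCycle := by
    simp [Walk.isCycle_def, Walk.isTrail_def, Sym2.eq, h1.ne, h2.ne, h3.ne, h4.ne, h1.ne',
      h4.ne', hac, hbd, hac.symm]
  simpa using egirth_le_length hc

lemma egirth_le_five {a b c d e : α} (h1 : G.Adj a b) (h2 : G.Adj b c) (h3 : G.Adj c d)
    (h4 : G.Adj d e) (h5 : G.Adj e a) (hac : a ≠ c) (had : a ≠ d) (hbd : b ≠ d) (hbe : b ≠ e)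
    (hce : c ≠ e) : G.egirth ≤ 5 := by
  have hc : (Walk.cons h1 (Walk.cons h2 (Walk.cons h3 (Walk.cons h4
      (Walk.cons h5 Walk.nil))))).IsCycle := by
    simp [Walk.isCycle_def, Walk.isTrail_def, Sym2.eq, h1.ne, h2.ne, h3.ne, h4.ne, h5.ne,
      h1.ne', h5.ne', hac, had, hbd, hbe, hce, hac.symm, had.symm]
  simpa using egirth_le_length hc

lemma not_adj_of_six_le_egirth (h6 : 6 ≤ G.egirth) {a b c : α} (h1 : G.Adj a b)
    (h2 : G.Adj b c) : ¬ G.Adj c a := fun h3 => by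
  have := h6.trans (egirth_le_three h1 h2 h3)
  norm_num at this

lemma sym2_eq_of_adj_of_six_le_egirth (h6 : 6 ≤ G.egirth) {i j : α} (hij : G.Adj i j)
    {t : α → α} (ht : ∀ k ∈ G.neighborSet i \ {j}, G.Adj k (t k) ∧ t k ≠ i) {u v : α}
    (hu : u ∈ ({i, j} ∪ t '' (G.neighborSet i \ {j}) : Set α))
    (hv : v ∈ ({i, j} ∪ t '' (G.neighborSet i \ {j}) : Set α)) (huv : G.Adj u v) :
    s(u, v) = s(i, j) := by
  have short : ∀ {n : ℕ∞}, G.egirth ≤ n → n < 6 → False := fun h hn =>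
    (h6.trans h).not_gt hn
  have not_adj_i_t : ∀ k ∈ G.neighborSet i \ {j}, ¬ G.Adj i (t k) := fun k hk h =>
    not_adj_of_six_le_egirth h6 hk.1 (ht k hk).1 h.symm
  have not_adj_j_t : ∀ k ∈ G.neighborSet i \ {j}, ¬ G.Adj j (t k) := fun k hk h =>
    short (egirth_le_four hk.1 (ht k hk).1 h.symm hij.symm (ht k hk).2.symm hk.2) (by decide)
  have not_adj_t_t : ∀ k ∈ G.neighborSet i \ {j}, ∀ l ∈ G.neighborSet i \ {j},
      ¬ G.Adj (t k) (t l) := by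
    intro k hk l hl h
    refine short (egirth_le_five hk.1 (ht k hk).1 h (ht l hl).1.symm (hl.1 : G.Adj i l).symm
      (ht k hk).2.symm (ht l hl).2.symm (fun hkl => not_adj_i_t l hl (hkl ▸ hk.1))
      (fun hkl => h.ne (by rw [hkl])) (fun hkl => not_adj_i_t k hk (hkl ▸ hl.1))) (by decide)
  simp only [Set.mem_union, Set.mem_insert_iff, Set.mem_singleton_iff, Set.mem_image] at hu hv
  rcases hu with (rfl | rfl) | ⟨k, hk, rfl⟩ <;> rcases hv with (rfl | rfl) | ⟨l, hl, rfl⟩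
  all_goals first
    | exact absurd rfl huv.ne
    | rfl
    | exact Sym2.eq_swap
    | exact absurd huv (not_adj_i_t _ ‹_›)
    | exact absurd huv.symm (not_adj_i_t _ ‹_›)
    | exact absurd huv (not_adj_j_t _ ‹_›)
    | exact absurd huv.symm (not_adj_j_t _ ‹_›)
    | exact absurd huv (not_adj_t_t _ ‹_› _ ‹_›)

lemma exists_adj_ne_of_forall_leaf_two_le_dist {i : α}
    (hl : ∀ ℓ, (G.neighborSet ℓ).ncard = 1 → 2 ≤ G.dist i ℓ) {k : α} (hk : G.Adj i k) :
    ∃ t, G.Adj k t ∧ t ≠ i := by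
  by_contra! h
  have hleaf : G.neighborSet k = {i} :=
    Set.eq_singleton_iff_unique_mem.mpr ⟨hk.symm, fun u hu => h u hu⟩
  have := hl k (by rw [hleaf, Set.ncard_singleton])
  rw [dist_eq_one_iff_adj.mpr hk] at this
  omega

end SimpleGraph

namespace Finsupp

variable {ι σ : Type*}

lemma le_iff_of_support_eq_pair [DecidableEq σ] {g c : σ →₀ ℕ} {u v : σ}
    (hg : g.support = {u, v}) : g ≤ c ↔ g u ≤ c u ∧ g v ≤ c v := by
  refine ⟨fun h => ⟨h u, h v⟩, fun ⟨hu, hv⟩ w => ?_⟩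
  by_cases hw : w ∈ g.support
  · rw [hg, Finset.mem_insert, Finset.mem_singleton] at hw
    rcases hw with rfl | rfl <;> assumption
  · simp [Finsupp.notMem_support_iff.mp hw]

lemma finset_sum_single_apply_eq_zero {M : Type*} [AddCommMonoid M]
    {F : Finset ι} {t : ι → σ} {e : ι → M} {w : σ} (hw : ∀ k ∈ F, t k ≠ w) :
    (∑ k ∈ F, Finsupp.single (t k) (e k)) w = 0 := by
  rw [Finsupp.finsetSum_apply]
  exact Finset.sum_eq_zero fun k hk => Finsupp.single_eq_of_ne (hw k hk).symm

lemma le_finset_sum_single_apply {F : Finset ι} {t : ι → σ} {e : ι → ℕ}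
    {k : ι} (hk : k ∈ F) : e k ≤ (∑ l ∈ F, Finsupp.single (t l) (e l)) (t k) := by
  simpa using Finset.single_le_sum (f := fun l => Finsupp.single (t l) (e l))
    (fun _ _ => zero_le) hk (t k)

end Finsupp

section SymbolicPower

variable {R : Type*} [CommRing R]

lemma mem_localizedComponent_of_mul_mem {I P : Ideal R} (hP : P.IsPrime) {r s : R}
    (hs : s ∉ P) (hsr : s * r ∈ I) : r ∈ localizedComponent I P hP := by
  let := hP
  have hu : IsUnit (algebraMap R (Localization.AtPrime P) s) :=
    IsLocalization.map_units _ (⟨s, hs⟩ : P.primeCompl)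
  change algebraMap R _ r ∈ I.map (algebraMap R (Localization.AtPrime P))
  rw [← Ideal.unit_mul_mem_iff_mem _ hu, ← map_mul]
  exact Ideal.mem_map_of_mem _ hsr

lemma mem_symbolicPower_one_of_forall {I : Ideal R} {r : R}
    (h : ∀ P ∈ I.minimalPrimes, ∃ s ∉ P, s * r ∈ I) : r ∈ symbolicPower I 1 := by
  rw [symbolicPower, Submodule.mem_iInf]
  rintro ⟨P, hP⟩
  obtain ⟨s, hs, hsr⟩ := h P hP
  exact mem_localizedComponent_of_mul_mem hP.1.1 hs (by rwa [pow_one])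

end SymbolicPower

namespace MvPolynomial

variable {R : Type*} {σ : Type*}

lemma monomial_one_mem_of_le [CommSemiring R] {I : Ideal (MvPolynomial σ R)} {a b : σ →₀ ℕ}
    (ha : monomial a (1 : R) ∈ I) (hab : a ≤ b) : monomial b (1 : R) ∈ I := by
  rw [← tsub_add_cancel_of_le hab, ← mul_one (1 : R), ← monomial_mul]
  exact I.mul_mem_left _ ha

variable [CommRing R]

noncomputable def killVars (s : Set σ) : MvPolynomial σ R →ₐ[R] MvPolynomial σ R :=
  aeval fun v => by classical exact if v ∈ s then 0 else X v

lemma sub_killVars_mem_span_X_image (s : Set σ) (f : MvPolynomial σ R) :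
    f - killVars s f ∈ Ideal.span (X '' s) := by
  classical
  induction f using MvPolynomial.induction_on with
  | C a => simp [killVars]
  | add p q hp hq => simpa [add_sub_add_comm] using Ideal.add_mem _ hp hq
  | mul_X p v hp =>
    by_cases hv : v ∈ s
    · simpa [killVars, hv] using
        Ideal.mul_mem_left _ p (Ideal.subset_span (Set.mem_image_of_mem X hv))
    · simpa [killVars, hv, sub_mul] using Ideal.mul_mem_right (X v) _ hp

lemma span_X_image_eq_ker_killVars (s : Set σ) :
    Ideal.span (X '' s) = RingHom.ker (killVars (R := R) s) := by
  classical
  refine le_antisymm (Ideal.span_le.mpr ?_) fun f hf => ?_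
  · rintro _ ⟨v, hv, rfl⟩
    simp [killVars, hv]
  · simpa [RingHom.mem_ker.mp hf] using sub_killVars_mem_span_X_image s f

lemma isPrime_span_X_image [IsDomain R] (s : Set σ) :
    (Ideal.span (X '' s : Set (MvPolynomial σ R))).IsPrime := by
  rw [span_X_image_eq_ker_killVars]
  exact RingHom.ker_isPrime _

lemma X_mem_span_X_image_iff [Nontrivial R] {s : Set σ} {v : σ} :
    (X v : MvPolynomial σ R) ∈ Ideal.span (X '' s) ↔ v ∈ s := by
  classical
  simp [mem_ideal_span_X_image, support_X, Finsupp.single_apply]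

end MvPolynomial

section MonomialIdeal

open MvPolynomial

variable {K : Type*} [Field K] {σ : Type*} {I : Ideal (MvPolynomial σ K)}

lemma exists_mem_minGens_le {c : σ →₀ ℕ} (hc : monomial c (1 : K) ∈ I) :
    ∃ g ∈ minGens I, g ≤ c := by
  obtain ⟨g, ⟨hgI, hgc⟩, hmin⟩ :=
    wellFounded_lt.has_min {b | monomial b (1 : K) ∈ I ∧ b ≤ c} ⟨c, hc, le_rfl⟩
  refine ⟨g, ⟨hgI, fun b hbI hbg => ?_⟩, hgc⟩
  by_contra hne
  exact hmin b ⟨hbI, hbg.trans hgc⟩ (lt_of_le_of_ne hbg hne)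

lemma monomial_one_mem_iff {c : σ →₀ ℕ} :
    monomial c (1 : K) ∈ I ↔ ∃ g ∈ minGens I, g ≤ c :=
  ⟨exists_mem_minGens_le, fun ⟨_, hg, hgc⟩ => monomial_one_mem_of_le hg.1 hgc⟩

variable [DecidableEq σ]

lemma mem_supportedOn_comm {i j : σ} {g : σ →₀ ℕ} :
    g ∈ supportedOn I i j ↔ g ∈ supportedOn I j i := by
  simp [supportedOn, Finset.pair_comm]

lemma ne_of_mem_supportedOn (h2 : IsSupportTwo I) {i j : σ} {g : σ →₀ ℕ}
    (hg : g ∈ supportedOn I i j) : i ≠ j := by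
  rintro rfl
  simpa [hg.2] using h2 g hg.1

lemma adj_of_mem_supportedOn (h2 : IsSupportTwo I) {i j : σ} {g : σ →₀ ℕ}
    (hg : g ∈ supportedOn I i j) : (underGraph I).Adj i j :=
  ⟨ne_of_mem_supportedOn h2 hg, g, hg⟩

lemma exists_mem_supportedOn_of_mem_minGens (h2 : IsSupportTwo I) {g : σ →₀ ℕ}
    (hg : g ∈ minGens I) : ∃ u v, g ∈ supportedOn I u v := by
  obtain ⟨u, v, -, huv⟩ := Finset.card_eq_two.mp (h2 g hg)
  exact ⟨u, v, hg, huv⟩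

lemma nuExp_le {i j : σ} {g : σ →₀ ℕ} (hg : g ∈ supportedOn I i j) : nuExp I i j ≤ g i :=
  Nat.sInf_le ⟨g, hg, rfl⟩

lemma exists_apply_eq_nuExp {i j : σ} (h : (supportedOn I i j).Nonempty) :
    ∃ g ∈ supportedOn I i j, g i = nuExp I i j :=
  Nat.sInf_mem (h.image _)

lemma lt_nuExp_or_lt_nuExp {i j : σ} {a b g : σ →₀ ℕ} (ha : a ∈ supportedOn I i j)
    (hb : b ∈ supportedOn I i j) (hab : a ≠ b) (hg : g ∈ supportedOn I i j) :
    nuExp I i j < g i ∨ nuExp I j i < g j := by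
  by_contra! hle
  have hgle : ∀ h ∈ supportedOn I i j, g ≤ h := fun h hh =>
    (Finsupp.le_iff_of_support_eq_pair hg.2).mpr
      ⟨hle.1.trans (nuExp_le hh), hle.2.trans (nuExp_le (mem_supportedOn_comm.mp hh))⟩
  exact hab ((ha.1.2 g hg.1.1 (hgle a ha)).symm.trans (hb.1.2 g hg.1.1 (hgle b hb)))

end MonomialIdeal

section MinimalPrimes

open MvPolynomial

variable {K : Type*} [Field K] {σ : Type*} {I : Ideal (MvPolynomial σ K)}

lemma exists_X_mem_of_monomial_one_mem {P : Ideal (MvPolynomial σ K)} (hP : P.IsPrime)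
    {g : σ →₀ ℕ} (hg : monomial g (1 : K) ∈ P) : ∃ w ∈ g.support, X w ∈ P := by
  rw [monomial_eq, C_1, one_mul, Finsupp.prod, hP.prod_mem_iff] at hg
  obtain ⟨w, hw, hXw⟩ := hg
  exact ⟨w, hw, hP.mem_of_pow_mem _ hXw⟩

lemma monomial_one_mem_span_X_image_iff {c : σ →₀ ℕ} {s : Set σ} :
    monomial c (1 : K) ∈ Ideal.span (X '' s) ↔ ∃ w ∈ s, c w ≠ 0 := by
  classical
  simp [mem_ideal_span_X_image, support_monomial]

variable [DecidableEq σ]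

lemma isVertexCover_setOf_X_mem {P : Ideal (MvPolynomial σ K)} (hP : P.IsPrime) (hIP : I ≤ P) :
    IsVertexCover (underGraph I) {v | X v ∈ P} := by
  rintro u v ⟨-, g, hg⟩
  obtain ⟨w, hw, hXw⟩ := exists_X_mem_of_monomial_one_mem hP (hIP hg.1.1)
  rw [hg.2, Finset.mem_insert, Finset.mem_singleton] at hw
  rcases hw with rfl | rfl
  exacts [Or.inl hXw, Or.inr hXw]

lemma le_span_X_image_of_isVertexCover (hmon : IsMonomialIdeal I) (h2 : IsSupportTwo I)
    {C : Set σ} (hC : IsVertexCover (underGraph I) C) : I ≤ Ideal.span (X '' C) := by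
  obtain ⟨A, hA⟩ := hmon
  rw [hA, Ideal.span_le]
  rintro _ ⟨c, hcA, rfl⟩
  obtain ⟨g, hg, hgc⟩ := exists_mem_minGens_le (hA ▸ Ideal.subset_span ⟨c, hcA, rfl⟩ :
    monomial c (1 : K) ∈ I)
  obtain ⟨u, v, huv⟩ := exists_mem_supportedOn_of_mem_minGens h2 hg
  have hc : ∀ w ∈ g.support, c w ≠ 0 := fun w hw =>
    (Nat.pos_of_ne_zero (Finsupp.mem_support_iff.mp hw)).trans_le (hgc w) |>.ne'
  rw [SetLike.mem_coe, monomial_one_mem_span_X_image_iff]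
  rcases hC (adj_of_mem_supportedOn h2 huv) with h | h
  exacts [⟨u, h, hc u (by simp [huv.2])⟩, ⟨v, h, hc v (by simp [huv.2])⟩]

lemma exists_adj_X_notMem_of_mem_minimalPrimes (hmon : IsMonomialIdeal I)
    (h2 : IsSupportTwo I) {P : Ideal (MvPolynomial σ K)} (hP : P ∈ I.minimalPrimes) {v : σ}
    (hv : X v ∈ P) : ∃ w, (underGraph I).Adj v w ∧ X w ∉ P := by
  by_contra! hnb
  set D := {w | X w ∈ P} \ {v}
  have hD : IsVertexCover (underGraph I) D := by
    intro p q hpq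
    rcases isVertexCover_setOf_X_mem hP.1.1 hP.1.2 hpq with hp | hq
    · by_cases hpv : p = v
      · exact Or.inr ⟨hnb q (hpv ▸ hpq), fun hqv => hpq.ne (hpv.trans hqv.symm)⟩
      · exact Or.inl ⟨hp, hpv⟩
    · by_cases hqv : q = v
      · exact Or.inl ⟨hnb p (hqv ▸ hpq.symm), fun hpv => hpq.ne (hpv.trans hqv.symm)⟩
      · exact Or.inr ⟨hq, hqv⟩
  have hDP : Ideal.span (X '' D) ≤ P := Ideal.span_le.mpr (by rintro _ ⟨w, hw, rfl⟩; exact hw.1)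
  have hPD := hP.2 ⟨isPrime_span_X_image D, le_span_X_image_of_isVertexCover hmon h2 hD⟩ hDP
  exact (X_mem_span_X_image_iff.mp (hPD hv)).2 rfl

end MinimalPrimes

section Witness

open MvPolynomial SimpleGraph

variable {K : Type*} [Field K] {σ : Type*} [DecidableEq σ] {I : Ideal (MvPolynomial σ K)}

lemma exists_forall_adj_mem_supportedOn_of_forall_leaf_two_le_dist {i : σ}
    (hl : ∀ ℓ, ((underGraph I).neighborSet ℓ).ncard = 1 → 2 ≤ (underGraph I).dist i ℓ) :
    ∃ (t : σ → σ) (g : σ → σ →₀ ℕ), ∀ k, (underGraph I).Adj i k →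
      (underGraph I).Adj k (t k) ∧ t k ≠ i ∧ g k ∈ supportedOn I k (t k) := by
  have hsel : ∀ k, ∃ (t : σ) (g : σ →₀ ℕ), (underGraph I).Adj i k →
      (underGraph I).Adj k t ∧ t ≠ i ∧ g ∈ supportedOn I k t := by
    intro k
    by_cases hk : (underGraph I).Adj i k
    · obtain ⟨t, hkt, hti⟩ := exists_adj_ne_of_forall_leaf_two_le_dist hl hk
      obtain ⟨g, hg⟩ := hkt.2
      exact ⟨t, g, fun _ => ⟨hkt, hti, hg⟩⟩
    · exact ⟨k, 0, fun h => absurd h hk⟩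
  choose t g ht using hsel
  exact ⟨t, g, ht⟩

lemma monomial_one_mem_symbolicPower_one_of_forall {m : σ →₀ ℕ}
    (h : ∀ P ∈ I.minimalPrimes, ∃ u v, X u ∉ P ∧ ∃ g ∈ supportedOn I u v, g v ≤ m v) :
    monomial m (1 : K) ∈ symbolicPower I 1 := by
  refine mem_symbolicPower_one_of_forall fun P hP => ?_
  obtain ⟨u, v, hu, g, hg, hgv⟩ := h P hP
  refine ⟨X u ^ g u, fun h => hu (hP.1.1.mem_of_pow_mem _ h), ?_⟩
  rw [X_pow_eq_monomial, monomial_mul, one_mul]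
  refine monomial_one_mem_of_le hg.1.1 ((Finsupp.le_iff_of_support_eq_pair hg.2).mpr ⟨?_, ?_⟩)
  · simp
  · exact hgv.trans (by simp)

lemma monomial_one_mem_symbolicPower_one_of_nuExp_le (hmon : IsMonomialIdeal I)
    (h2 : IsSupportTwo I) {i j : σ} (hij : (supportedOn I i j).Nonempty) {t : σ → σ}
    {m : σ →₀ ℕ} (hmi : nuExp I i j ≤ m i) (hmj : nuExp I j i ≤ m j)
    (ht : ∀ k ∈ (underGraph I).neighborSet i \ {j},
      ∃ g ∈ supportedOn I k (t k), g (t k) ≤ m (t k)) :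
    monomial m (1 : K) ∈ symbolicPower I 1 := by
  refine monomial_one_mem_symbolicPower_one_of_forall fun P hP => ?_
  by_cases hi : X i ∈ P
  · by_cases hj : X j ∈ P
    · obtain ⟨w, hw, hXw⟩ := exists_adj_X_notMem_of_mem_minimalPrimes hmon h2 hP hi
      exact ⟨w, t w, hXw, ht w ⟨hw, fun h : w = j => hXw (h ▸ hj)⟩⟩
    · obtain ⟨g, hg, hgi⟩ := exists_apply_eq_nuExp hij
      exact ⟨j, i, hj, g, mem_supportedOn_comm.mp hg, hgi.trans_le hmi⟩
  · obtain ⟨g, hg, hgj⟩ := exists_apply_eq_nuExp (hij.mono fun _ => mem_supportedOn_comm.mp)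
    exact ⟨i, j, hi, g, mem_supportedOn_comm.mp hg, hgj.trans_le hmj⟩

lemma monomial_one_notMem_of_le_nuExp (h2 : IsSupportTwo I)
    (hgirth : 6 ≤ (underGraph I).egirth) {i j : σ} {a b : σ →₀ ℕ}
    (ha : a ∈ supportedOn I i j) (hb : b ∈ supportedOn I i j) (hab : a ≠ b) {t : σ → σ}
    (ht : ∀ k ∈ (underGraph I).neighborSet i \ {j}, (underGraph I).Adj k (t k) ∧ t k ≠ i)
    {m : σ →₀ ℕ} (hmi : m i ≤ nuExp I i j) (hmj : m j ≤ nuExp I j i)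
    (hm : ∀ w ∉ ({i, j} ∪ t '' ((underGraph I).neighborSet i \ {j}) : Set σ), m w = 0) :
    monomial m (1 : K) ∉ I := by
  rw [monomial_one_mem_iff]
  rintro ⟨g, hg, hgm⟩
  obtain ⟨u, v, huv⟩ := exists_mem_supportedOn_of_mem_minGens h2 hg
  have hsupp : ∀ w ∈ g.support,
      w ∈ ({i, j} ∪ t '' ((underGraph I).neighborSet i \ {j}) : Set σ) := fun w hw =>
    by_contra fun h => Finsupp.mem_support_iff.mp hw (Nat.le_zero.mp (hm w h ▸ hgm w))
  have hedge := sym2_eq_of_adj_of_six_le_egirth hgirth (adj_of_mem_supportedOn h2 ha) ht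
    (hsupp u (by simp [huv.2])) (hsupp v (by simp [huv.2])) (adj_of_mem_supportedOn h2 huv)
  have hgij : g ∈ supportedOn I i j := by
    rcases Sym2.eq_iff.mp hedge with ⟨rfl, rfl⟩ | ⟨rfl, rfl⟩
    exacts [huv, mem_supportedOn_comm.mp huv]
  rcases lt_nuExp_or_lt_nuExp ha hb hab hgij with h | h
  · exact (hgm i).not_gt (hmi.trans_lt h)
  · exact (hgm j).not_gt (hmj.trans_lt h)

end Witness

open MvPolynomial SimpleGraph in
theorem symbolicPower_one_ne_of_forall_leaf_two_le_dist {K : Type*} [Field K] {σ : Type*}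
    [Finite σ] [DecidableEq σ] {I : Ideal (MvPolynomial σ K)} (hmon : IsMonomialIdeal I)
    (h2 : IsSupportTwo I) (hgirth : 6 ≤ (underGraph I).egirth) {i j : σ} {a b : σ →₀ ℕ}
    (ha : a ∈ supportedOn I i j) (hb : b ∈ supportedOn I i j) (hab : a ≠ b)
    (hl : ∀ ℓ, ((underGraph I).neighborSet ℓ).ncard = 1 → 2 ≤ (underGraph I).dist i ℓ) :
    symbolicPower I 1 ≠ I := by
  set G := underGraph I
  set N := G.neighborSet i \ {j}
  have hij : G.Adj i j := adj_of_mem_supportedOn h2 ha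
  obtain ⟨t, g, ht⟩ := exists_forall_adj_mem_supportedOn_of_forall_leaf_two_le_dist hl
  have htj : ∀ k ∈ N, t k ≠ j := fun k hk htk =>
    not_adj_of_six_le_egirth hgirth hk.1 (htk ▸ (ht k hk.1).1) hij.symm
  set s := ∑ k ∈ (Set.toFinite N).toFinset, Finsupp.single (t k) (g k (t k))
  have hs : ∀ w, (∀ k ∈ N, t k ≠ w) → s w = 0 := fun w hw =>
    Finsupp.finset_sum_single_apply_eq_zero fun k hk => hw k ((Set.Finite.mem_toFinset _).mp hk)
  set m : σ →₀ ℕ := Finsupp.single i (nuExp I i j) + Finsupp.single j (nuExp I j i) + s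
  have hmi : m i = nuExp I i j := by
    simp [m, hs i fun k hk => (ht k hk.1).2.1, hij.ne]
  have hmj : m j = nuExp I j i := by
    simp [m, hs j htj, hij.ne']
  have hmt : ∀ k ∈ N, g k (t k) ≤ m (t k) := fun k hk =>
    (Finsupp.le_finset_sum_single_apply ((Set.Finite.mem_toFinset _).mpr hk)).trans
      ((le_add_self : s ≤ m) (t k))
  have hm0 : ∀ w ∉ ({i, j} ∪ t '' N : Set σ), m w = 0 := by
    intro w hw
    simp only [Set.mem_union, Set.mem_insert_iff, Set.mem_singleton_iff, Set.mem_image,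
      not_or, not_exists, not_and] at hw
    simp [m, hs w fun k hk => hw.2 k hk, Ne.symm hw.1.1, Ne.symm hw.1.2]
  have hmem : monomial m (1 : K) ∈ symbolicPower I 1 :=
    monomial_one_mem_symbolicPower_one_of_nuExp_le hmon h2 ⟨a, ha⟩ hmi.ge hmj.ge
      fun k hk => ⟨g k, (ht k hk.1).2.2, hmt k hk⟩
  have hnotMem : monomial m (1 : K) ∉ I :=
    monomial_one_notMem_of_le_nuExp h2 hgirth ha hb hab
      (fun k hk => ⟨(ht k hk.1).1, (ht k hk.1).2.1⟩) hmi.le hmj.le hm0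
  exact fun h => hnotMem (h ▸ hmem)

theorem stmt5 {K : Type*} [Field K] {n : ℕ} (I : Ideal (MvPolynomial (Fin n) K))
    (hmon : IsMonomialIdeal I) (h2 : IsSupportTwo I)
    (hgirth : 6 ≤ (underGraph I).egirth)
    (i j : Fin n) (a b : Fin n →₀ ℕ) (ha : a ∈ supportedOn I i j)
    (hb : b ∈ supportedOn I i j) (hab : a ≠ b)
    (hleaf :
      (∀ ℓ : Fin n, ((underGraph I).neighborSet ℓ).ncard = 1 →
        2 ≤ (underGraph I).dist i ℓ) ∨
      (∀ ℓ : Fin n, ((underGraph I).neighborSet ℓ).ncard = 1 →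
        2 ≤ (underGraph I).dist j ℓ)) :
    symbolicPower I 1 ≠ I := by
  rcases hleaf with hl | hl
  · exact symbolicPower_one_ne_of_forall_leaf_two_le_dist hmon h2 hgirth ha hb hab hl
  · exact symbolicPower_one_ne_of_forall_leaf_two_le_dist hmon h2 hgirth
      (mem_supportedOn_comm.mp ha) (mem_supportedOn_comm.mp hb) hab hl
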